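/- Equivalence of the two k-connectivity encodings (Menger): let K = (V,E,ℓ) be a Kripke structure with symmetric edge relation E and let y be an atomic proposition labelling exactly one state. With p_1,…,p_{k−1} fresh atomic propositions, let Φ_k := ∃p_1.…∃p_{k−1}.( ⋀_{1≤i<k} EX( E( p_i ∧ ⋀_{j≠i} ¬p_j ) U y ) ∧ EX( E( ⋀_{1≤i<k} ¬p_i ) U y ) ) and Ψ_k := ∀¹p_1.…∀¹p_{k−1}. EX( E( ⋀_{1≤i<k} ¬p_i ) U y ). Then for every state x, K,x ⊨ Φ_k if and only if K,x ⊨ Ψ_k. -/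

import Mathlib

open Classical

/-- Syntax of QCTL: `φ ::= q | ¬φ | φ∨ψ | EX φ | E φ U ψ | A φ U ψ | ∃p.φ`. -/
inductive QCTL (AP : Type) : Type where
  | atom : AP → QCTL AP
  | qneg : QCTL AP → QCTL AP
  | qor  : QCTL AP → QCTL AP → QCTL AP
  | qEX  : QCTL AP → QCTL AP
  | qEU  : QCTL AP → QCTL AP → QCTL AP
  | qAU  : QCTL AP → QCTL AP → QCTL AP
  | qexi : AP → QCTL AP → QCTL AP

/-- A Kripke structure over atomic propositions `AP` with (finite) state space `V`:
a serial edge relation and a labelling function. -/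
structure Kripke (AP V : Type) where
  E : V → V → Prop
  serial : ∀ v, ∃ w, E v w
  label : V → Set AP

variable {AP V : Type}

/-- `K'` agrees with `K` (same edges) except possibly on the labelling of `p`. -/
def Kripke.AgreeExcept (K K' : Kripke AP V) (p : AP) : Prop :=
  K'.E = K.E ∧ ∀ v q, q ≠ p → (q ∈ K'.label v ↔ q ∈ K.label v)

/-- Structure semantics of QCTL. -/
def QCTL.sat : QCTL AP → Kripke AP V → V → Prop
  | .atom p, K, x => p ∈ K.label x
  | .qneg φ, K, x => ¬ φ.sat K x
  | .qor φ ψ, K, x => φ.sat K x ∨ ψ.sat K x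
  | .qEX φ, K, x => ∃ y, K.E x y ∧ φ.sat K y
  | .qEU φ ψ, K, x => ∃ ρ : ℕ → V, ρ 0 = x ∧ (∀ i, K.E (ρ i) (ρ (i + 1))) ∧
      ∃ i, ψ.sat K (ρ i) ∧ ∀ j < i, φ.sat K (ρ j)
  | .qAU φ ψ, K, x => ∀ ρ : ℕ → V, ρ 0 = x → (∀ i, K.E (ρ i) (ρ (i + 1))) →
      ∃ i, ψ.sat K (ρ i) ∧ ∀ j < i, φ.sat K (ρ j)
  | .qexi p φ, K, x => ∃ K' : Kripke AP V, K.AgreeExcept K' p ∧ φ.sat K' x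

namespace QCTL

def qand (φ ψ : QCTL AP) : QCTL AP := qneg (qor (qneg φ) (qneg ψ))
def qimp (φ ψ : QCTL AP) : QCTL AP := qor (qneg φ) ψ
def qiff (φ ψ : QCTL AP) : QCTL AP := qand (qimp φ ψ) (qimp ψ φ)
def qtop [Inhabited AP] : QCTL AP := qor (atom default) (qneg (atom default))
def qbot [Inhabited AP] : QCTL AP := qneg qtop
def qAX (φ : QCTL AP) : QCTL AP := qneg (qEX (qneg φ))
def qEF [Inhabited AP] (φ : QCTL AP) : QCTL AP := qEU qtop φ
def qAG [Inhabited AP] (φ : QCTL AP) : QCTL AP := qneg (qEF (qneg φ))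
def qall (p : AP) (φ : QCTL AP) : QCTL AP := qneg (qexi p (qneg φ))

/-- All atomic propositions occurring in a formula (free or bound). -/
def atoms : QCTL AP → Set AP
  | atom p => {p}
  | qneg φ => φ.atoms
  | qor φ ψ => φ.atoms ∪ ψ.atoms
  | qEX φ => φ.atoms
  | qEU φ ψ => φ.atoms ∪ ψ.atoms
  | qAU φ ψ => φ.atoms ∪ ψ.atoms
  | qexi p φ => insert p φ.atoms

/-- Size of a formula. -/
def qsize : QCTL AP → ℕ
  | atom _ => 1
  | qneg φ => φ.qsize + 1
  | qor φ ψ => φ.qsize + ψ.qsize + 1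
  | qEX φ => φ.qsize + 1
  | qEU φ ψ => φ.qsize + ψ.qsize + 1
  | qAU φ ψ => φ.qsize + ψ.qsize + 1
  | qexi _ φ => φ.qsize + 1

end QCTL

/-- Equivalence of two QCTL formulas: same truth value at every state of every
(finite) Kripke structure. -/
def QEquiv (φ ψ : QCTL AP) : Prop :=
  ∀ (V : Type) [Fintype V] (K : Kripke AP V) (x : V), φ.sat K x ↔ ψ.sat K x

/-- `∃p₁.…∃pₙ.φ` for a list of atomic propositions. -/
def exiMany {AP : Type} (l : List AP) (φ : QCTL AP) : QCTL AP := l.foldr QCTL.qexi φ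

/-- Conjunction of a list of formulas, with a final base conjunct. -/
def conjList {AP : Type} (l : List (QCTL AP)) (base : QCTL AP) : QCTL AP :=
  l.foldr QCTL.qand base

/-- Disjunction of a list of formulas, with a final base disjunct. -/
def disjList {AP : Type} (l : List (QCTL AP)) (base : QCTL AP) : QCTL AP :=
  l.foldr QCTL.qor base
/-- `E_{=1}F(φ) := EF φ ∧ ∀q.( EF(q∧φ) → AG(φ→q) )`, with `q` a fresh atom. -/
def EuniqF {AP : Type} [Inhabited AP] (q : AP) (φ : QCTL AP) : QCTL AP :=
  QCTL.qand (QCTL.qEF φ)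
    (QCTL.qall q
      (QCTL.qimp (QCTL.qEF (QCTL.qand (QCTL.atom q) φ))
        (QCTL.qAG (QCTL.qimp φ (QCTL.atom q)))))

/-- `∀¹p.φ := ∀p.( E_{=1}F(p) → φ )`, with `q` the fresh atom used inside `E_{=1}F`. -/
def qall1 {AP : Type} [Inhabited AP] (p q : AP) (φ : QCTL AP) : QCTL AP :=
  QCTL.qall p (QCTL.qimp (EuniqF q (QCTL.atom p)) φ)

/-- `∃¹p.φ := ∃p.( E_{=1}F(p) ∧ φ )`, with `q` the fresh atom used inside `E_{=1}F`. -/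
def qexi1 {AP : Type} [Inhabited AP] (p q : AP) (φ : QCTL AP) : QCTL AP :=
  QCTL.qexi p (QCTL.qand (EuniqF q (QCTL.atom p)) φ)
/-- The QCTL formula
`Φ_k := ∃p₁…p_{k−1}.( ⋀_{1≤i<k} EX( E(pᵢ ∧ ⋀_{j≠i}¬pⱼ) U y ) ∧ EX( E(⋀ᵢ¬pᵢ) U y ) )`. -/
def PhiConn {AP : Type} [Inhabited AP] (k : ℕ) (p : Fin (k - 1) → AP) (yA : AP) : QCTL AP :=
  exiMany ((List.finRange (k - 1)).map p)
    (conjList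
      ((List.finRange (k - 1)).map fun i =>
        QCTL.qEX (QCTL.qEU
          (conjList
            (((List.finRange (k - 1)).filter (fun j => decide (j ≠ i))).map
              fun j => QCTL.qneg (QCTL.atom (p j)))
            (QCTL.atom (p i)))
          (QCTL.atom yA)))
      (QCTL.qEX (QCTL.qEU
        (conjList ((List.finRange (k - 1)).map fun j => QCTL.qneg (QCTL.atom (p j)))
          QCTL.qtop)
        (QCTL.atom yA))))

/-- `Ψ_k := ∀¹p₁.…∀¹p_{k−1}. EX( E(⋀ᵢ¬pᵢ) U y )`, with `q i` the fresh atom used by the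
`i`-th unique-labelling quantifier `∀¹`. -/
def PsiConn {AP : Type} [Inhabited AP] (k : ℕ) (p q : Fin (k - 1) → AP) (yA : AP) : QCTL AP :=
  (List.finRange (k - 1)).foldr (fun i acc => qall1 (p i) (q i) acc)
    (QCTL.qEX (QCTL.qEU
      (conjList ((List.finRange (k - 1)).map fun j => QCTL.qneg (QCTL.atom (p j)))
        QCTL.qtop)
      (QCTL.atom yA)))

/-!
`Φ_k` holds at `x` iff there are `k` walks from `x` to the `y`-state `t` with pairwise disjoint
interiors: the labels `pᵢ` mark the interiors of `k - 1` of them, and the last one avoids every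
`pᵢ`. `Ψ_k` holds iff no `k - 1` states reachable from `x` meet the interior of every walk from
`x` to `t`. The first property implies the second by pigeonhole; the converse is Menger's theorem,
applied to the successors of `x` and the predecessors of `t`.

Menger's theorem is proved for directed graphs and vertex sets `A`, `B` by induction on the number
of arcs. If deleting an arc `e` leaves an `A`–`B` separator `S` with fewer than `k` vertices, then
`S` together with either end of `e` is a separator of size `k`. By induction there are `k` disjoint
walks from `A` to `S ∪ {e.1}` and from `S ∪ {e.2}` to `B` avoiding `e`; since `S` still separates,
they meet only at their ends in `S`, and glued there (and along `e`) they give `k` disjoint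
`A`–`B` walks.
-/

namespace List

variable {α : Type*} {p : α → Prop}

theorem exists_concat_prefix_of_exists : ∀ {l : List α}, (∃ a ∈ l, p a) →
    ∃ m a, m ++ [a] <+: l ∧ p a ∧ ∀ b ∈ m, ¬ p b
  | [], h => by simp at h
  | a :: l, h => by
    by_cases ha : p a
    · exact ⟨[], a, by simp, ha, by simp⟩
    · obtain ⟨m, b, hpre, hb, hm⟩ := exists_concat_prefix_of_exists (l := l) (by simpa [ha] using h)
      exact ⟨a :: m, b, by simpa using hpre, hb, by simpa [ha] using hm⟩

theorem exists_cons_suffix_of_exists {l : List α} (h : ∃ a ∈ l, p a) :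
    ∃ a m, a :: m <:+ l ∧ p a ∧ ∀ b ∈ m, ¬ p b := by
  obtain ⟨m, a, hpre, ha, hm⟩ := exists_concat_prefix_of_exists (l := l.reverse) (by simpa using h)
  exact ⟨a, m.reverse, by simpa [← reverse_prefix] using hpre, ha, by simpa using hm⟩

end List

namespace Menger

variable {V : Type*}

def IsWalk (F : Finset (V × V)) (l : List V) : Prop :=
  l.IsChain fun a b => (a, b) ∈ F

structure IsWalkBetween (F : Finset (V × V)) (A B : Finset V) (l : List V) : Prop where
  isWalk : IsWalk F l
  head_mem : ∃ a ∈ l.head?, a ∈ A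
  getLast_mem : ∃ b ∈ l.getLast?, b ∈ B

def Separates (F : Finset (V × V)) (A B S : Finset V) : Prop :=
  ∀ l, IsWalkBetween F A B l → ∃ v ∈ l, v ∈ S

def HasDisjointWalks (F : Finset (V × V)) (A B : Finset V) (ι : Type*) : Prop :=
  ∃ P : ι → List V, (∀ i, IsWalkBetween F A B (P i)) ∧ Pairwise fun i j => (P i).Disjoint (P j)

theorem IsWalkBetween.ne_nil {F : Finset (V × V)} {A B : Finset V} {l : List V}
    (hl : IsWalkBetween F A B l) : l ≠ [] := by
  rintro rfl
  simpa using hl.head_mem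

theorem IsWalk.mono {F F' : Finset (V × V)} (h : F ⊆ F') {l : List V} (hl : IsWalk F l) :
    IsWalk F' l :=
  hl.imp fun _ _ hab => h hab

theorem IsWalk.erase_or [DecidableEq V] {F : Finset (V × V)} (e : V × V) :
    ∀ {l : List V}, IsWalk F l → IsWalk (F.erase e) l ∨ e.1 ∈ l.dropLast ∧ e.2 ∈ l.tail
  | [], _ | [_], _ => Or.inl (by simp [IsWalk])
  | a :: b :: l, h => by
    rw [IsWalk, List.isChain_cons_cons] at h
    by_cases hab : (a, b) = e
    · subst hab
      exact Or.inr (by simp)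
    · rcases IsWalk.erase_or e h.2 with h' | ⟨h1, h2⟩
      · exact Or.inl (List.isChain_cons_cons.2 ⟨Finset.mem_erase.2 ⟨hab, h.1⟩, h'⟩)
      · exact Or.inr ⟨by simp [h1], List.mem_of_mem_tail h2⟩

theorem IsWalkBetween.mono {F F' : Finset (V × V)} (h : F ⊆ F') {A B : Finset V} {l : List V}
    (hl : IsWalkBetween F A B l) : IsWalkBetween F' A B l :=
  ⟨hl.isWalk.mono h, hl.head_mem, hl.getLast_mem⟩

theorem HasDisjointWalks.mono {F F' : Finset (V × V)} (h : F ⊆ F') {A B : Finset V} {ι : Type*}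
    (hP : HasDisjointWalks F A B ι) : HasDisjointWalks F' A B ι :=
  let ⟨P, hw, hd⟩ := hP
  ⟨P, fun i => (hw i).mono h, hd⟩

theorem HasDisjointWalks.comp_embedding {F : Finset (V × V)} {A B : Finset V} {ι κ : Type*}
    (hP : HasDisjointWalks F A B κ) (f : ι ↪ κ) : HasDisjointWalks F A B ι :=
  let ⟨P, hw, hd⟩ := hP
  ⟨P ∘ f, fun i => hw (f i), hd.comp_of_injective f.injective⟩

theorem separates_inter_of_empty [DecidableEq V] (A B : Finset V) : Separates ∅ A B (A ∩ B) := by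
  rintro (_ | ⟨a, _ | ⟨b, l⟩⟩) ⟨hw, ⟨a', ha', hA⟩, ⟨b', hb', hB⟩⟩
  · simp at ha'
  · simp only [List.head?_cons, Option.mem_def, Option.some.injEq, List.getLast?_singleton]
      at ha' hb'
    subst ha' hb'
    exact ⟨a, List.mem_singleton_self a, Finset.mem_inter.2 ⟨hA, hB⟩⟩
  · simp [IsWalk] at hw

theorem hasDisjointWalks_inter [DecidableEq V] (F : Finset (V × V)) (A B : Finset V) :
    HasDisjointWalks F A B ↥(A ∩ B) :=
  ⟨fun s => [s.1], fun s => ⟨List.isChain_singleton _, ⟨s.1, rfl, (Finset.mem_inter.1 s.2).1⟩,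
    ⟨s.1, rfl, (Finset.mem_inter.1 s.2).2⟩⟩,
    fun _ _ hne => List.singleton_disjoint.2 fun h => hne (Subtype.ext (List.mem_singleton.1 h))⟩

theorem Separates.insert_of_erase [DecidableEq V] {F : Finset (V × V)} {e : V × V}
    {A B S : Finset V} (hS : Separates (F.erase e) A B S) {w : V} (hw : w = e.1 ∨ w = e.2) :
    Separates F A B (insert w S) := by
  intro l hl
  rcases hl.isWalk.erase_or e with h | ⟨h1, h2⟩
  · obtain ⟨v, hv, hvS⟩ := hS l ⟨h, hl.head_mem, hl.getLast_mem⟩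
    exact ⟨v, hv, Finset.mem_insert_of_mem hvS⟩
  · rcases hw with rfl | rfl
    · exact ⟨_, List.dropLast_subset _ h1, Finset.mem_insert_self _ _⟩
    · exact ⟨_, List.mem_of_mem_tail h2, Finset.mem_insert_self _ _⟩

theorem Separates.of_erase_left [DecidableEq V] {F : Finset (V × V)} {e : V × V}
    {A B X T : Finset V} (hX : Separates F A B X) (he : e.1 ∈ X)
    (hT : Separates (F.erase e) A X T) : Separates F A B T := by
  intro l hl
  obtain ⟨m, a, ⟨r, rfl⟩, ha, hm⟩ := List.exists_concat_prefix_of_exists (p := (· ∈ X)) (hX l hl)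
  have hw : IsWalk F (m ++ [a]) := hl.isWalk.prefix ⟨r, rfl⟩
  have hw' := (hw.erase_or e).resolve_right fun h => hm _ (by simpa using h.1) he
  obtain ⟨v, hv, hvT⟩ :=
    hT _ ⟨hw', by simpa [List.head?_append] using hl.head_mem, ⟨a, by simp, ha⟩⟩
  exact ⟨v, List.mem_append_left _ hv, hvT⟩

theorem Separates.of_erase_right [DecidableEq V] {F : Finset (V × V)} {e : V × V}
    {A B X T : Finset V} (hX : Separates F A B X) (he : e.2 ∈ X)
    (hT : Separates (F.erase e) X B T) : Separates F A B T := by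
  intro l hl
  obtain ⟨a, m, ⟨r, rfl⟩, ha, hm⟩ := List.exists_cons_suffix_of_exists (p := (· ∈ X)) (hX l hl)
  have hw : IsWalk F (a :: m) := hl.isWalk.suffix ⟨r, rfl⟩
  have hw' := (hw.erase_or e).resolve_right fun h => hm _ h.2 he
  obtain ⟨v, hv, hvT⟩ :=
    hT _ ⟨hw', ⟨a, rfl, ha⟩, by simpa [List.getLast?_append] using hl.getLast_mem⟩
  exact ⟨v, List.mem_append_right _ hv, hvT⟩

theorem exists_section_of_pairwise_disjoint {ι : Type*} [Fintype ι] [Nonempty ι]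
    {P : ι → List V} (hd : Pairwise fun i j => (P i).Disjoint (P j)) {a : ι → V}
    (hai : ∀ i, a i ∈ P i) {X : Finset V} (haX : ∀ i, a i ∈ X) (hX : X.card ≤ Fintype.card ι) :
    ∃ σ : V → ι, ∀ s ∈ X, a (σ s) = s := by
  have ha : Function.Injective a := fun i j hij => by
    by_contra hne
    exact hd hne (hai i) (hij ▸ hai j)
  have hsurj : ∀ s ∈ X, ∃ i, a i = s := fun s hs =>
    let ⟨i, _, hi⟩ := Finset.surjOn_of_injOn_of_card_le a (s := .univ) (fun i _ => haX i)
      ha.injOn (by simpa using hX) hs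
    ⟨i, hi⟩
  choose! σ hσ using hsurj
  exact ⟨σ, hσ⟩

theorem HasDisjointWalks.exists_ending_at {F : Finset (V × V)} {A X : Finset V} {ι : Type*}
    [Fintype ι] [Nonempty ι] (hP : HasDisjointWalks F A X ι) (hX : X.card ≤ Fintype.card ι) :
    ∃ M : V → List V,
      (∀ s ∈ X, IsWalk F (M s ++ [s]) ∧ (∃ a ∈ (M s ++ [s]).head?, a ∈ A) ∧ ∀ v ∈ M s, v ∉ X) ∧
      ∀ s ∈ X, ∀ s' ∈ X, s ≠ s' → (M s ++ [s]).Disjoint (M s' ++ [s']) := by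
  obtain ⟨P, hw, hd⟩ := hP
  have hcut i := List.exists_concat_prefix_of_exists (p := (· ∈ X))
    (let ⟨b, hb, hbX⟩ := (hw i).getLast_mem; ⟨b, List.mem_of_getLast? hb, hbX⟩)
  choose m a hpre haX hm using hcut
  have hsub i : m i ++ [a i] ⊆ P i := (hpre i).subset
  obtain ⟨σ, hσ⟩ := exists_section_of_pairwise_disjoint hd (fun i => hsub i (by simp)) haX hX
  have key i : IsWalk F (m i ++ [a i]) ∧ (∃ b ∈ (m i ++ [a i]).head?, b ∈ A) ∧
      ∀ v ∈ m i, v ∉ X := by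
    obtain ⟨r, hr⟩ := hpre i
    exact ⟨(hw i).isWalk.prefix ⟨r, hr⟩, by simpa [← hr, List.head?_append] using (hw i).head_mem,
      hm i⟩
  refine ⟨fun s => m (σ s), fun s hs => by simpa only [hσ s hs] using key (σ s),
    fun s hs s' hs' hne => ?_⟩
  have hdisj := hd (i := σ s) (j := σ s') fun h => hne (by rw [← hσ s hs, ← hσ s' hs', h])
  simpa only [hσ s hs, hσ s' hs'] using
    List.disjoint_of_subset_left (hsub _) (List.disjoint_of_subset_right (hsub _) hdisj)

theorem HasDisjointWalks.exists_starting_at {F : Finset (V × V)} {X B : Finset V} {ι : Type*}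
    [Fintype ι] [Nonempty ι] (hP : HasDisjointWalks F X B ι) (hX : X.card ≤ Fintype.card ι) :
    ∃ N : V → List V,
      (∀ s ∈ X, IsWalk F (s :: N s) ∧ (∃ b ∈ (s :: N s).getLast?, b ∈ B) ∧ ∀ v ∈ N s, v ∉ X) ∧
      ∀ s ∈ X, ∀ s' ∈ X, s ≠ s' → (s :: N s).Disjoint (s' :: N s') := by
  obtain ⟨P, hw, hd⟩ := hP
  have hcut i := List.exists_cons_suffix_of_exists (p := (· ∈ X))
    (let ⟨b, hb, hbX⟩ := (hw i).head_mem; ⟨b, List.mem_of_head? hb, hbX⟩)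
  choose a n hsuf haX hn using hcut
  have hsub i : a i :: n i ⊆ P i := (hsuf i).subset
  obtain ⟨σ, hσ⟩ := exists_section_of_pairwise_disjoint hd (fun i => hsub i (by simp)) haX hX
  have key i : IsWalk F (a i :: n i) ∧ (∃ b ∈ (a i :: n i).getLast?, b ∈ B) ∧
      ∀ v ∈ n i, v ∉ X := by
    obtain ⟨r, hr⟩ := hsuf i
    exact ⟨(hw i).isWalk.suffix ⟨r, hr⟩,
      by simpa [← hr, List.getLast?_append] using (hw i).getLast_mem, hn i⟩
  refine ⟨fun s => n (σ s), fun s hs => by simpa only [hσ s hs] using key (σ s),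
    fun s hs s' hs' hne => ?_⟩
  have hdisj := hd (i := σ s) (j := σ s') fun h => hne (by rw [← hσ s hs, ← hσ s' hs', h])
  simpa only [hσ s hs, hσ s' hs'] using
    List.disjoint_of_subset_left (hsub _) (List.disjoint_of_subset_right (hsub _) hdisj)

theorem Separates.eq_of_mem_of_mem {F : Finset (V × V)} {A B S : Finset V}
    (hS : Separates F A B S) {m n : List V} {s s' w : V}
    (hm : IsWalk F (m ++ [s])) (hmA : ∃ a ∈ (m ++ [s]).head?, a ∈ A) (hmS : ∀ v ∈ m, v ∉ S)
    (hn : IsWalk F (s' :: n)) (hnB : ∃ b ∈ (s' :: n).getLast?, b ∈ B) (hnS : ∀ v ∈ n, v ∉ S)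
    (hw : w ∈ m ++ [s]) (hw' : w ∈ s' :: n) : w = s ∧ w = s' := by
  obtain ⟨r', r, hr⟩ := List.append_of_mem hw'
  have hsuf : w :: r <:+ s' :: n := ⟨r', hr.symm⟩
  have hrn : r ⊆ n := by
    rcases List.suffix_cons_iff.1 hsuf with h | h
    · exact (List.cons.inj h).2 ▸ List.Subset.refl _
    · exact fun x hx => h.subset (List.mem_cons_of_mem _ hx)
  have hits : ∀ l, l ++ [w] <+: m ++ [s] → ∃ z ∈ l ++ [w], z ∈ S := by
    rintro l ⟨t, ht⟩
    have hglue : IsWalk F (l ++ [w] ++ r) :=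
      (hm.prefix ⟨t, ht⟩).append_overlap (hn.suffix hsuf) (List.cons_ne_nil _ _)
    obtain ⟨z, hz, hzS⟩ := hS _ ⟨hglue, by simpa [← ht, List.head?_append] using hmA,
      by simpa [hr, List.getLast?_append] using hnB⟩
    exact (List.mem_append.1 hz).elim (fun hz => ⟨z, hz, hzS⟩) fun hz => absurd hzS (hnS z (hrn hz))
  have hws : w = s := by
    by_contra hne
    obtain ⟨l, l', rfl⟩ := List.append_of_mem (by simpa [hne] using hw : w ∈ m)
    obtain ⟨z, hz, hzS⟩ := hits l (by simp)
    exact hmS z (by simp at hz ⊢; tauto) hzS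
  subst hws
  obtain ⟨z, hz, hzS⟩ := hits m (List.prefix_refl _)
  obtain rfl : z = w := List.mem_singleton.1 ((List.mem_append.1 hz).resolve_left (hmS z · hzS))
  exact ⟨rfl, (List.mem_cons.1 hw').resolve_right (hnS z · hzS)⟩

theorem isWalkBetween_append_cons {F : Finset (V × V)} {A B : Finset V} {m n : List V}
    {s s' : V} (hm : IsWalk F (m ++ [s])) (hmA : ∃ a ∈ (m ++ [s]).head?, a ∈ A)
    (hn : IsWalk F (s' :: n)) (hnB : ∃ b ∈ (s' :: n).getLast?, b ∈ B) (hs : (s, s') ∈ F) :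
    IsWalkBetween F A B (m ++ [s] ++ s' :: n) :=
  ⟨List.isChain_append.2 ⟨hm, hn, by simpa using hs⟩, by simpa [List.head?_append] using hmA,
    by simpa [List.getLast?_append] using hnB⟩

theorem isWalkBetween_append_overlap {F : Finset (V × V)} {A B : Finset V} {m n : List V}
    {s : V} (hm : IsWalk F (m ++ [s])) (hmA : ∃ a ∈ (m ++ [s]).head?, a ∈ A)
    (hn : IsWalk F (s :: n)) (hnB : ∃ b ∈ (s :: n).getLast?, b ∈ B) :
    IsWalkBetween F A B (m ++ [s] ++ n) :=
  ⟨hm.append_overlap hn (List.cons_ne_nil _ _), by simpa [List.head?_append] using hmA,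
    by simpa [List.getLast?_append] using hnB⟩

theorem option_elim_val_mem_insert [DecidableEq V] {S : Finset V} {u : V} (o : Option S) :
    o.elim u Subtype.val ∈ insert u S := by
  rcases o with _ | ⟨s, hs⟩
  · exact Finset.mem_insert_self _ _
  · exact Finset.mem_insert_of_mem hs

theorem option_elim_val_inj {S : Finset V} {u v : V} (hu : u ∉ S) (hv : v ∉ S)
    {o o' : Option S} (h : o.elim u Subtype.val = o'.elim v Subtype.val) : o = o' := by
  rcases o with _ | ⟨s, hs⟩ <;> rcases o' with _ | ⟨s', hs'⟩
  · rfl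
  · exact absurd hs' ((show u = s' from h) ▸ hu)
  · exact absurd hs ((show v = s from h.symm) ▸ hv)
  · exact congrArg some (Subtype.ext h)

theorem HasDisjointWalks.of_erase [DecidableEq V] {F : Finset (V × V)} {e : V × V} (he : e ∈ F)
    {A B S : Finset V} (hS : Separates (F.erase e) A B S) (hu : e.1 ∉ S) (hv : e.2 ∉ S)
    (hP : HasDisjointWalks (F.erase e) A (insert e.1 S) (Fin (S.card + 1)))
    (hQ : HasDisjointWalks (F.erase e) (insert e.2 S) B (Fin (S.card + 1))) :
    HasDisjointWalks F A B (Option S) := by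
  let a (o : Option S) : V := o.elim e.1 Subtype.val
  let b (o : Option S) : V := o.elim e.2 Subtype.val
  have ha o : a o ∈ insert e.1 S := option_elim_val_mem_insert o
  have hb o : b o ∈ insert e.2 S := option_elim_val_mem_insert o
  obtain ⟨M, hM, hMd⟩ := hP.exists_ending_at (by simp [Finset.card_insert_of_notMem hu])
  obtain ⟨N, hN, hNd⟩ := hQ.exists_starting_at (by simp [Finset.card_insert_of_notMem hv])
  let R : Option S → List V
    | none => M e.1 ++ [e.1] ++ (e.2 :: N e.2)
    | some s => M s.1 ++ [s.1] ++ N s.1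
  have hR o : IsWalkBetween F A B (R o) := by
    obtain ⟨hMw, hMA, -⟩ := hM _ (ha o)
    obtain ⟨hNw, hNB, -⟩ := hN _ (hb o)
    replace hMw := hMw.mono (Finset.erase_subset e F)
    replace hNw := hNw.mono (Finset.erase_subset e F)
    rcases o with _ | s
    · exact isWalkBetween_append_cons hMw hMA hNw hNB he
    · exact isWalkBetween_append_overlap hMw hMA hNw hNB
  have hmem o : ∀ w ∈ R o, w ∈ M (a o) ++ [a o] ∨ w ∈ b o :: N (b o) := by
    rcases o with _ | s <;> simp +contextual [R, a, b, or_assoc]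
  have hmeet o o' w (h : w ∈ M (a o) ++ [a o]) (h' : w ∈ b o' :: N (b o')) : o = o' := by
    obtain ⟨hMw, hMA, hMX⟩ := hM _ (ha o)
    obtain ⟨hNw, hNB, hNX⟩ := hN _ (hb o')
    obtain ⟨h1, h2⟩ := hS.eq_of_mem_of_mem hMw hMA
      (fun v hv hvS => hMX v hv (Finset.mem_insert_of_mem hvS)) hNw hNB
      (fun v hv hvS => hNX v hv (Finset.mem_insert_of_mem hvS)) h h'
    exact option_elim_val_inj hu hv (h1.symm.trans h2)
  refine ⟨R, hR, fun o o' hne w hw hw' => ?_⟩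
  rcases hmem o w hw with h | h <;> rcases hmem o' w hw' with h' | h'
  · exact hMd _ (ha o) _ (ha o') (fun h => hne (option_elim_val_inj hu hu h)) h h'
  · exact hne (hmeet o o' w h h')
  · exact hne (hmeet o' o w h' h).symm
  · exact hNd _ (hb o) _ (hb o') (fun h => hne (option_elim_val_inj hv hv h)) h h'

theorem hasDisjointWalks_of_forall_separates [DecidableEq V] (F : Finset (V × V))
    (A B : Finset V) (k : ℕ) (h : ∀ S, Separates F A B S → k ≤ S.card) :
    HasDisjointWalks F A B (Fin k) := by
  induction F using Finset.strongInduction generalizing A B k with | H F ih => ?_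
  rcases F.eq_empty_or_nonempty with rfl | ⟨e, he⟩
  · obtain ⟨f⟩ := Function.Embedding.nonempty_of_card_le (α := Fin k) (β := ↥(A ∩ B))
      (by simpa using h _ (separates_inter_of_empty A B))
    exact (hasDisjointWalks_inter ∅ A B).comp_embedding f
  by_cases hF : ∀ S, Separates (F.erase e) A B S → k ≤ S.card
  · exact (ih _ (Finset.erase_ssubset he) A B k hF).mono (Finset.erase_subset e F)
  push Not at hF
  obtain ⟨S, hS, hSk⟩ := hF
  have hins {w} (hw : w = e.1 ∨ w = e.2) : w ∉ S ∧ k = S.card + 1 := by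
    have hk := h _ (hS.insert_of_erase hw)
    have hwS : w ∉ S := fun hwS => by rw [Finset.insert_eq_of_mem hwS] at hk; omega
    rw [Finset.card_insert_of_notMem hwS] at hk
    exact ⟨hwS, by omega⟩
  obtain ⟨hu, rfl⟩ := hins (Or.inl rfl)
  obtain ⟨hv, -⟩ := hins (Or.inr rfl)
  have hP := ih _ (Finset.erase_ssubset he) A (insert e.1 S) _ fun T hT =>
    h T ((hS.insert_of_erase (Or.inl rfl)).of_erase_left (Finset.mem_insert_self _ _) hT)
  have hQ := ih _ (Finset.erase_ssubset he) (insert e.2 S) B _ fun T hT =>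
    h T ((hS.insert_of_erase (Or.inr rfl)).of_erase_right (Finset.mem_insert_self _ _) hT)
  exact (hP.of_erase he hS hu hv hQ).comp_embedding
    (Fintype.equivFinOfCardEq (by simp)).symm.toEmbedding

end Menger

section WalkInterior

variable {V : Type*}

def IsWalkInterior (R : V → V → Prop) (x t : V) (m : List V) : Prop :=
  (x :: (m ++ [t])).IsChain R

theorem IsWalkInterior.reflTransGen {R : V → V → Prop} {x t : V} {m : List V}
    (h : IsWalkInterior R x t m) {u : V} (hu : u ∈ m) : Relation.ReflTransGen R x u :=
  List.IsChain.cons_induction (Relation.ReflTransGen R x ·) _ h (fun _ _ => flip .tail) .refl u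
    (List.mem_append_left _ hu)

open Menger in
theorem isWalkBetween_iff_isWalkInterior [DecidableEq V] [Fintype V] {R : V → V → Prop}
    [DecidableRel R] {x t : V} {m : List V} (hm : m ≠ []) :
    IsWalkBetween ({e | R e.1 e.2} : Finset (V × V)) {v | R x v} {v | R v t} m ↔
      IsWalkInterior R x t m := by
  obtain ⟨a, m, rfl⟩ := List.exists_cons_of_ne_nil hm
  have hF : IsWalk ({e | R e.1 e.2} : Finset (V × V)) (a :: m) ↔ (a :: m).IsChain R := by
    simp [IsWalk]
  have hI : IsWalkInterior R x t (a :: m) ↔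
      R x a ∧ (a :: m).IsChain R ∧ ∀ b ∈ (a :: m).getLast?, R b t := by
    rw [IsWalkInterior, List.isChain_cons, List.isChain_append]
    simp
  rw [hI, ← hF]
  constructor
  · rintro ⟨hw, ⟨b, hb, hbA⟩, ⟨c, hc, hcB⟩⟩
    simp only [List.head?_cons, Option.mem_def, Option.some.injEq] at hb
    subst hb
    exact ⟨by simpa using hbA, hw, fun b hb => by simp_all⟩
  · rintro ⟨hxa, hw, ht⟩
    obtain ⟨c, hc⟩ := Option.isSome_iff_exists.1 (List.getLast?_isSome.2 hm)
    exact ⟨hw, ⟨a, rfl, by simpa using hxa⟩, ⟨c, hc, by simpa using ht c hc⟩⟩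

theorem exists_disjoint_walkInteriors_iff [Fintype V] {R : V → V → Prop} {x t : V} {ι : Type*}
    [Fintype ι] :
    (∃ I : ι → List V, (∀ i, IsWalkInterior R x t (I i)) ∧
        Pairwise fun i j => (I i).Disjoint (I j)) ↔
      ∀ S : Finset V, S.card < Fintype.card ι → ∃ m, IsWalkInterior R x t m ∧ ∀ u ∈ m, u ∉ S := by
  classical
  constructor
  · rintro ⟨I, hI, hd⟩ S hS
    by_contra! h
    choose f hf hfS using fun i => h (I i) (hI i)
    obtain ⟨i, -, j, -, hij, hfij⟩ := Finset.exists_ne_map_eq_of_card_lt_of_maps_to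
      (s := .univ) (t := S) (by simpa using hS) (fun i _ => hfS i)
    exact hd hij (hf i) (hfij ▸ hf j)
  · intro h
    by_cases hxt : R x t
    · exact ⟨fun _ => [], fun _ => List.isChain_pair.2 hxt, fun _ _ _ => List.disjoint_nil_left _⟩
    obtain ⟨P, hP, hd⟩ := Menger.hasDisjointWalks_of_forall_separates {e | R e.1 e.2}
        {v | R x v} {v | R v t} (Fintype.card ι) fun S hS => by
      by_contra! hlt
      obtain ⟨m, hm, hmS⟩ := h S hlt
      have hne : m ≠ [] := by
        rintro rfl
        exact hxt (List.isChain_pair.1 hm)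
      obtain ⟨v, hv, hvS⟩ := hS m ((isWalkBetween_iff_isWalkInterior hne).2 hm)
      exact hmS v hv hvS
    let e := Fintype.equivFin ι
    exact ⟨fun i => P (e i), fun i => (isWalkBetween_iff_isWalkInterior (hP (e i)).ne_nil).1 (hP _),
      hd.comp_of_injective e.injective⟩

theorem forall_reachable_exists_walkInterior_iff {R : V → V → Prop} {x t : V} {n : ℕ} :
    (∀ f : Fin n → V, (∀ i, Relation.ReflTransGen R x (f i)) →
        ∃ m, IsWalkInterior R x t m ∧ ∀ u ∈ m, ∀ i, u ≠ f i) ↔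
      ∀ S : Finset V, S.card ≤ n → ∃ m, IsWalkInterior R x t m ∧ ∀ u ∈ m, u ∉ S := by
  classical
  constructor
  · intro h S hS
    let L := (S.filter (Relation.ReflTransGen R x)).toList
    have hreach i : Relation.ReflTransGen R x (L.getD i x) := by
      rw [List.getD_eq_getElem?_getD]
      cases hi : L[i]? with
      | none => exact .refl
      | some v => exact (by simpa [L] using List.mem_of_getElem? hi : v ∈ S ∧ _).2
    obtain ⟨m, hm, hmf⟩ := h (fun i => L.getD i x) fun i => hreach i
    refine ⟨m, hm, fun u hu huS => ?_⟩
    obtain ⟨j, hj, rfl⟩ := List.getElem_of_mem (show u ∈ L by simp [L, huS, hm.reflTransGen hu])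
    have hjn : j < n := hj.trans_le ((Finset.length_toList _).trans_le
      ((Finset.card_filter_le _ _).trans hS))
    exact hmf _ hu ⟨j, hjn⟩ (List.getD_eq_getElem _ _ hj).symm
  · intro h f _
    obtain ⟨m, hm, hmS⟩ := h (Finset.univ.image f) (Finset.card_image_le.trans (by simp))
    exact ⟨m, hm, fun u hu i hui => hmS u hu (by simp [hui])⟩

theorem exists_labelling_iff_exists_disjoint_walkInteriors {R : V → V → Prop} {x t : V}
    {ι : Type*} :
    (∃ P : ι → Set V,
        (∀ i, ∃ m, IsWalkInterior R x t m ∧ ∀ u ∈ m, u ∈ P i ∧ ∀ j ≠ i, u ∉ P j) ∧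
        ∃ m, IsWalkInterior R x t m ∧ ∀ u ∈ m, ∀ j, u ∉ P j) ↔
      ∃ I : Option ι → List V, (∀ o, IsWalkInterior R x t (I o)) ∧
        Pairwise fun o o' => (I o).Disjoint (I o') := by
  constructor
  · rintro ⟨P, h, m₀, hm₀, hm₀P⟩
    choose m hm hmP using h
    refine ⟨fun o => o.elim m₀ m, fun o => by cases o <;> simp [hm₀, hm], ?_⟩
    rintro (_ | i) (_ | j) hne u hu hu'
    · exact hne rfl
    · exact hm₀P u hu j (hmP j u hu').1
    · exact hm₀P u hu' i (hmP i u hu).1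
    · exact (hmP i u hu).2 j (fun h => hne (h ▸ rfl)) (hmP j u hu').1
  · rintro ⟨I, hI, hd⟩
    refine ⟨fun i => {u | u ∈ I (some i)}, fun i => ⟨I (some i), hI _, fun u hu => ⟨hu, ?_⟩⟩,
      I none, hI none, fun u hu j hj => hd (Option.some_ne_none j).symm hu hj⟩
    exact fun j hji hj => hd (fun h => hji (Option.some_injective _ h).symm) hu hj

theorem forall_existsUnique_reachable_iff {R : V → V → Prop} {x t : V} {ι : Type*} :
    (∀ P : ι → Set V, (∀ i, ∃! v, Relation.ReflTransGen R x v ∧ v ∈ P i) →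
        ∃ m, IsWalkInterior R x t m ∧ ∀ u ∈ m, ∀ j, u ∉ P j) ↔
      ∀ f : ι → V, (∀ i, Relation.ReflTransGen R x (f i)) →
        ∃ m, IsWalkInterior R x t m ∧ ∀ u ∈ m, ∀ i, u ≠ f i := by
  constructor
  · intro h f hf
    obtain ⟨m, hm, hmP⟩ := h (fun i => {f i}) fun i => ⟨f i, ⟨hf i, rfl⟩, fun v hv => hv.2⟩
    exact ⟨m, hm, fun u hu i => hmP u hu i⟩
  · intro h P hP
    choose f hf hfu using hP
    obtain ⟨m, hm, hmf⟩ := h f fun i => (hf i).1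
    exact ⟨m, hm, fun u hu j huj => hmf u hu j (hfu j u ⟨hm.reflTransGen hu, huj⟩)⟩

end WalkInterior

namespace Kripke

theorem ext_of_label {K₁ K₂ : Kripke AP V} (hE : K₁.E = K₂.E)
    (hl : ∀ v, K₁.label v = K₂.label v) : K₁ = K₂ := by
  cases K₁; cases K₂
  cases hE
  congr
  exact funext hl

theorem exists_path (K : Kripke AP V) (v : V) :
    ∃ ρ : ℕ → V, ρ 0 = v ∧ ∀ i, K.E (ρ i) (ρ (i + 1)) :=
  ⟨fun i => (fun w => (K.serial w).choose)^[i] v, rfl, fun i => by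
    simpa only [Function.iterate_succ_apply'] using (K.serial _).choose_spec⟩

def setLabel (K : Kripke AP V) (a : AP) (Q : Set V) : Kripke AP V where
  E := K.E
  serial := K.serial
  label v := {b | b ≠ a ∧ b ∈ K.label v ∨ b = a ∧ v ∈ Q}

variable {K : Kripke AP V} {a b : AP} {Q : Set V} {v : V}

@[simp]
theorem setLabel_E : (K.setLabel a Q).E = K.E := rfl

@[simp]
theorem mem_label_setLabel_self : a ∈ (K.setLabel a Q).label v ↔ v ∈ Q := by
  simp [setLabel]

theorem mem_label_setLabel_of_ne (h : b ≠ a) : b ∈ (K.setLabel a Q).label v ↔ b ∈ K.label v := by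
  simp [setLabel, h]

theorem agreeExcept_iff_exists_setLabel {K' : Kripke AP V} :
    K.AgreeExcept K' a ↔ ∃ Q, K' = K.setLabel a Q := by
  constructor
  · rintro ⟨hE, hl⟩
    refine ⟨{v | a ∈ K'.label v}, ext_of_label hE fun v => Set.ext fun b => ?_⟩
    by_cases hb : b = a
    · subst hb
      simp
    · rw [mem_label_setLabel_of_ne hb, hl v b hb]
  · rintro ⟨Q, rfl⟩
    exact ⟨rfl, fun v b hb => mem_label_setLabel_of_ne hb⟩

def relabel (K : Kripke AP V) {ι : Type*} (p : ι → AP) (P : ι → Set V) : Kripke AP V where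
  E := K.E
  serial := K.serial
  label v := {b | b ∉ Set.range p ∧ b ∈ K.label v ∨ ∃ i, p i = b ∧ v ∈ P i}

variable {ι : Type*} {p : ι → AP} {P : ι → Set V}

@[simp]
theorem relabel_E : (K.relabel p P).E = K.E := rfl

theorem mem_label_relabel_apply (hp : p.Injective) {i : ι} :
    p i ∈ (K.relabel p P).label v ↔ v ∈ P i := by
  simp [relabel, hp.eq_iff]

theorem mem_label_relabel_of_notMem (hb : b ∉ Set.range p) :
    b ∈ (K.relabel p P).label v ↔ b ∈ K.label v := by
  simp only [Set.mem_range, not_exists] at hb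
  simp [relabel, hb]

theorem relabel_self (hp : p.Injective) : K.relabel p (fun i => {v | p i ∈ K.label v}) = K := by
  refine ext_of_label rfl fun v => Set.ext fun b => ?_
  by_cases hb : b ∈ Set.range p
  · obtain ⟨i, rfl⟩ := hb
    simp [mem_label_relabel_apply hp]
  · exact mem_label_relabel_of_notMem hb

theorem setLabel_relabel [DecidableEq ι] (hp : p.Injective) (i : ι) (Q : Set V) :
    (K.relabel p P).setLabel (p i) Q = K.relabel p (Function.update P i Q) := by
  refine ext_of_label rfl fun v => Set.ext fun b => ?_
  by_cases hb : b ∈ Set.range p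
  · obtain ⟨j, rfl⟩ := hb
    rw [mem_label_relabel_apply hp]
    by_cases hji : j = i
    · subst hji
      simp
    · rw [mem_label_setLabel_of_ne (hp.ne hji), mem_label_relabel_apply hp,
        Function.update_of_ne hji]
  · have hbi : b ≠ p i := fun h => hb ⟨i, h.symm⟩
    rw [mem_label_setLabel_of_ne hbi, mem_label_relabel_of_notMem hb,
      mem_label_relabel_of_notMem hb]

end Kripke

theorem forall_notMem_eq_update_iff {ι α : Type*} [DecidableEq ι] {L : List ι} {i : ι}
    {P P₀ : ι → α} {Q : α} :
    (∀ j ∉ L, P j = Function.update P₀ i Q j) ↔ (∀ j ∉ i :: L, P j = P₀ j) ∧ (i ∉ L → P i = Q) := by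
  constructor
  · intro h
    refine ⟨fun j hj => ?_, fun hi => (h i hi).trans (Function.update_self ..)⟩
    rw [List.mem_cons, not_or] at hj
    exact (h j hj.2).trans (Function.update_of_ne hj.1 ..)
  · rintro ⟨h, hi⟩ j hj
    by_cases hji : j = i
    · subst hji
      rw [Function.update_self]
      exact hi hj
    · rw [Function.update_of_ne hji]
      exact h j (by simp [hji, hj])

namespace QCTL

open Relation

variable {K : Kripke AP V} {φ ψ : QCTL AP} {a : AP} {x : V}

@[simp]
theorem sat_atom : (atom a).sat K x ↔ a ∈ K.label x := Iff.rfl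

@[simp]
theorem sat_qneg : (qneg φ).sat K x ↔ ¬ φ.sat K x := Iff.rfl

@[simp]
theorem sat_qand : (qand φ ψ).sat K x ↔ φ.sat K x ∧ ψ.sat K x := by
  simp [qand, sat]

@[simp]
theorem sat_qimp : (qimp φ ψ).sat K x ↔ (φ.sat K x → ψ.sat K x) := by
  simp [qimp, sat, imp_iff_not_or]

@[simp]
theorem sat_qtop [Inhabited AP] : (qtop : QCTL AP).sat K x := by
  simp [qtop, sat, _root_.em]

theorem sat_qexi : (qexi a φ).sat K x ↔ ∃ Q, φ.sat (K.setLabel a Q) x := by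
  simp only [sat, Kripke.agreeExcept_iff_exists_setLabel]
  constructor
  · rintro ⟨K', ⟨Q, rfl⟩, h⟩
    exact ⟨Q, h⟩
  · rintro ⟨Q, h⟩
    exact ⟨_, ⟨Q, rfl⟩, h⟩

theorem sat_qall : (qall a φ).sat K x ↔ ∀ Q, φ.sat (K.setLabel a Q) x := by
  show ¬ (qexi a (qneg φ)).sat K x ↔ _
  rw [sat_qexi]
  simp [sat]

theorem sat_conjList {l : List (QCTL AP)} :
    (conjList l φ).sat K x ↔ (∀ ψ ∈ l, ψ.sat K x) ∧ φ.sat K x := by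
  induction l with
  | nil => simp [conjList]
  | cons ψ l ih => simp [conjList, ← ih, and_assoc]

theorem sat_qEU_of_sat_right (h : ψ.sat K x) : (qEU φ ψ).sat K x :=
  let ⟨ρ, h0, hρ⟩ := K.exists_path x
  ⟨ρ, h0, hρ, 0, h0 ▸ h, fun _ h => absurd h (Nat.not_lt_zero _)⟩

theorem sat_qEU_of_step {y : V} (hφ : φ.sat K x) (hxy : K.E x y) (h : (qEU φ ψ).sat K y) :
    (qEU φ ψ).sat K x := by
  obtain ⟨ρ, rfl, hρ, i, hψ, hφρ⟩ := h
  refine ⟨fun j => Nat.casesOn j x ρ, rfl, ?_, i + 1, hψ, ?_⟩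
  · rintro (_ | j)
    exacts [hxy, hρ j]
  · rintro (_ | j) hj
    exacts [hφ, hφρ j (by omega)]

theorem sat_qEU_induction {P : V → Prop} (base : ∀ v, ψ.sat K v → P v)
    (step : ∀ v w, φ.sat K v → K.E v w → P w → P v) (h : (qEU φ ψ).sat K x) : P x := by
  obtain ⟨ρ, rfl, hρ, i, hψ, hφ⟩ := h
  induction i generalizing ρ with
  | zero => exact base _ hψ
  | succ i ih =>
    exact step _ _ (hφ 0 i.succ_pos) (hρ 0)
      (ih (fun j => ρ (j + 1)) (fun j => hρ (j + 1)) hψ fun j hj => hφ (j + 1) (by omega))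

theorem sat_qEF_iff [Inhabited AP] :
    (qEF φ).sat K x ↔ ∃ v, ReflTransGen K.E x v ∧ φ.sat K v := by
  constructor
  · exact sat_qEU_induction (P := fun v => ∃ u, ReflTransGen K.E v u ∧ φ.sat K u)
      (fun v hv => ⟨v, .refl, hv⟩) fun v w _ hvw ⟨u, hwu, hu⟩ => ⟨u, .head hvw hwu, hu⟩
  · rintro ⟨v, hxv, hv⟩
    induction hxv using ReflTransGen.head_induction_on with
    | refl => exact sat_qEU_of_sat_right hv
    | head hxy _ ih => exact sat_qEU_of_step sat_qtop hxy ih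

theorem sat_qAG_iff [Inhabited AP] :
    (qAG φ).sat K x ↔ ∀ v, ReflTransGen K.E x v → φ.sat K v := by
  rw [qAG, sat_qneg, sat_qEF_iff]
  simp

theorem sat_qEX_qEU_iff :
    (qEX (qEU φ ψ)).sat K x ↔
      ∃ m w, (x :: (m ++ [w])).IsChain K.E ∧ ψ.sat K w ∧ ∀ u ∈ m, φ.sat K u := by
  constructor
  · rintro ⟨y, hxy, h⟩
    refine sat_qEU_induction (P := fun y => ∀ x, K.E x y → ∃ m w,
      (x :: (m ++ [w])).IsChain K.E ∧ ψ.sat K w ∧ ∀ u ∈ m, φ.sat K u) ?_ ?_ h x hxy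
    · exact fun v hv x hxv => ⟨[], v, List.isChain_pair.2 hxv, hv, by simp⟩
    · intro v w hv hvw ih x hxv
      obtain ⟨m, u, hc, hu, hm⟩ := ih v hvw
      exact ⟨v :: m, u, List.isChain_cons_cons.2 ⟨hxv, hc⟩, hu,
        List.forall_mem_cons.2 ⟨hv, hm⟩⟩
  · rintro ⟨m, w, hc, hw, hm⟩
    induction m generalizing x with
    | nil => exact ⟨w, List.isChain_pair.1 hc, sat_qEU_of_sat_right hw⟩
    | cons v m ih =>
      rw [List.cons_append, List.isChain_cons_cons] at hc
      obtain ⟨y, hvy, hy⟩ := ih hc.2 fun u hu => hm u (List.mem_cons_of_mem _ hu)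
      exact ⟨v, hc.1, sat_qEU_of_step (hm v List.mem_cons_self) hvy hy⟩

theorem sat_qEX_qEU_atom_iff {yA : AP} {t : V} (hy : ∀ v, yA ∈ K.label v ↔ v = t) :
    (qEX (qEU φ (atom yA))).sat K x ↔ ∃ m, IsWalkInterior K.E x t m ∧ ∀ u ∈ m, φ.sat K u := by
  simp [sat_qEX_qEU_iff, hy, IsWalkInterior]

theorem sat_EuniqF_atom_iff [Inhabited AP] {p q : AP} (hqp : q ≠ p) :
    (EuniqF q (atom p)).sat K x ↔ ∃! v, ReflTransGen K.E x v ∧ p ∈ K.label v := by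
  simp only [EuniqF, sat_qand, sat_qEF_iff, sat_qall, sat_qimp, sat_qAG_iff, sat_atom,
    Kripke.setLabel_E, Kripke.mem_label_setLabel_self, Kripke.mem_label_setLabel_of_ne hqp.symm]
  constructor
  · rintro ⟨⟨v, hv, hpv⟩, h⟩
    exact ⟨v, ⟨hv, hpv⟩, fun w ⟨hw, hpw⟩ => h {v} ⟨v, hv, rfl, hpv⟩ w hw hpw⟩
  · rintro ⟨v, ⟨hv, hpv⟩, huniq⟩
    refine ⟨⟨v, hv, hpv⟩, fun Q ⟨u, hu, huQ, hpu⟩ w hw hpw => ?_⟩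
    rwa [huniq w ⟨hw, hpw⟩, ← huniq u ⟨hu, hpu⟩]

theorem sat_qall1 [Inhabited AP] {p q : AP} (hqp : q ≠ p) :
    (qall1 p q φ).sat K x ↔
      ∀ Q, (∃! v, ReflTransGen K.E x v ∧ v ∈ Q) → φ.sat (K.setLabel p Q) x := by
  simp only [qall1, sat_qall, sat_qimp, sat_EuniqF_atom_iff hqp, Kripke.setLabel_E,
    Kripke.mem_label_setLabel_self]

variable {ι : Type*} [DecidableEq ι] {p : ι → AP}

theorem sat_exiMany_relabel (hp : p.Injective) (L : List ι) {P₀ : ι → Set V} :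
    (exiMany (L.map p) φ).sat (K.relabel p P₀) x ↔
      ∃ P, (∀ j ∉ L, P j = P₀ j) ∧ φ.sat (K.relabel p P) x := by
  induction L generalizing P₀ with
  | nil =>
    refine ⟨fun h => ⟨P₀, fun _ _ => rfl, h⟩, fun ⟨P, hP, h⟩ => ?_⟩
    rwa [funext fun j => hP j List.not_mem_nil] at h
  | cons i L ih =>
    show (qexi (p i) (exiMany (L.map p) φ)).sat _ x ↔ _
    simp only [sat_qexi, Kripke.setLabel_relabel hp, ih, forall_notMem_eq_update_iff]
    exact ⟨fun ⟨_, P, ⟨hP, _⟩, h⟩ => ⟨P, hP, h⟩, fun ⟨P, hP, h⟩ => ⟨P i, P, ⟨hP, fun _ => rfl⟩, h⟩⟩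

theorem sat_foldr_qall1_relabel [Inhabited AP] {q : ι → AP} (hp : p.Injective)
    (hqp : ∀ i, q i ≠ p i) (L : List ι) {P₀ : ι → Set V} :
    (L.foldr (fun i acc => qall1 (p i) (q i) acc) φ).sat (K.relabel p P₀) x ↔
      ∀ P, (∀ j ∉ L, P j = P₀ j) → (∀ j ∈ L, ∃! v, ReflTransGen K.E x v ∧ v ∈ P j) →
        φ.sat (K.relabel p P) x := by
  induction L generalizing P₀ with
  | nil =>
    refine ⟨fun h P hP _ => ?_, fun h => h P₀ (fun _ _ => rfl) (by simp)⟩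
    rwa [funext fun j => hP j List.not_mem_nil]
  | cons i L ih =>
    simp only [List.foldr_cons, sat_qall1 (hqp i), Kripke.setLabel_relabel hp, ih,
      Kripke.relabel_E, forall_notMem_eq_update_iff, List.forall_mem_cons]
    constructor
    · rintro h P hP ⟨hPi, hPL⟩
      exact h (P i) hPi P ⟨hP, fun _ => rfl⟩ hPL
    · rintro h Q hQ P ⟨hP, hPi⟩ hPL
      refine h P hP ⟨?_, hPL⟩
      by_cases hiL : i ∈ L
      · exact hPL i hiL
      · exact hPi hiL ▸ hQ

end QCTL

section Encodings

open QCTL Relation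

variable [Inhabited AP] {K : Kripke AP V} {k : ℕ} {p : Fin (k - 1) → AP} {yA : AP} {t x : V}

theorem sat_phiConn_iff (hy : ∀ v, yA ∈ K.label v ↔ v = t) (hp : p.Injective)
    (hpy : ∀ i, p i ≠ yA) :
    (PhiConn k p yA).sat K x ↔ ∃ P : Fin (k - 1) → Set V,
      (∀ i, ∃ m, IsWalkInterior K.E x t m ∧ ∀ u ∈ m, u ∈ P i ∧ ∀ j ≠ i, u ∉ P j) ∧
      ∃ m, IsWalkInterior K.E x t m ∧ ∀ u ∈ m, ∀ j, u ∉ P j := by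
  have hyP P v : yA ∈ (K.relabel p P).label v ↔ v = t :=
    (Kripke.mem_label_relabel_of_notMem fun ⟨i, hi⟩ => hpy i hi).trans (hy v)
  -- `K` is itself relabelled by its own `p`-labelling, which brings the quantifier lemmas to bear
  conv_lhs => rw [← Kripke.relabel_self hp (K := K)]
  rw [PhiConn, sat_exiMany_relabel hp]
  refine exists_congr fun P => ?_
  simp [sat_conjList, sat_qEX_qEU_atom_iff (hyP P), Kripke.mem_label_relabel_apply hp,
    List.mem_filter, and_comm]

theorem sat_psiConn_iff {q : Fin (k - 1) → AP} (hy : ∀ v, yA ∈ K.label v ↔ v = t)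
    (hp : p.Injective) (hqp : ∀ i, q i ≠ p i) (hpy : ∀ i, p i ≠ yA) :
    (PsiConn k p q yA).sat K x ↔ ∀ P : Fin (k - 1) → Set V,
      (∀ i, ∃! v, ReflTransGen K.E x v ∧ v ∈ P i) →
        ∃ m, IsWalkInterior K.E x t m ∧ ∀ u ∈ m, ∀ j, u ∉ P j := by
  have hyP P v : yA ∈ (K.relabel p P).label v ↔ v = t :=
    (Kripke.mem_label_relabel_of_notMem fun ⟨i, hi⟩ => hpy i hi).trans (hy v)
  conv_lhs => rw [← Kripke.relabel_self hp (K := K)]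
  rw [PsiConn, sat_foldr_qall1_relabel hp hqp]
  refine forall_congr' fun P => ?_
  simp [sat_conjList, sat_qEX_qEU_atom_iff (hyP P), Kripke.mem_label_relabel_apply hp]

end Encodings

theorem phiConn_iff_psiConn_general {AP V : Type} [Inhabited AP] [Fintype V]
    (K : Kripke AP V)
    (yA : AP) (t : V) (hy : ∀ v, yA ∈ K.label v ↔ v = t)
    (k : ℕ) (p q : Fin (k - 1) → AP)
    (hpinj : Function.Injective p)
    (hpq : ∀ i j, p i ≠ q j) (hpy : ∀ i, p i ≠ yA)
    (x : V) :
    (PhiConn k p yA).sat K x ↔ (PsiConn k p q yA).sat K x := by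
  rw [sat_phiConn_iff hy hpinj hpy, sat_psiConn_iff hy hpinj (fun i => (hpq i i).symm) hpy,
    exists_labelling_iff_exists_disjoint_walkInteriors, exists_disjoint_walkInteriors_iff,
    forall_existsUnique_reachable_iff, forall_reachable_exists_walkInterior_iff]
  simp only [Fintype.card_option, Fintype.card_fin, Nat.lt_add_one_iff]

/-- Equivalence of the two `k`-connectivity encodings (by Menger's theorem): over a Kripke
structure with a symmetric edge relation in which `y` labels exactly one state, and with
the `pᵢ` (and the auxiliary `qᵢ`) fresh and pairwise distinct, `Φ_k` and `Ψ_k` are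
equivalent at every state. -/
theorem phiConn_iff_psiConn {AP V : Type} [Inhabited AP] [Fintype V]
    (K : Kripke AP V) (hsym : ∀ a b, K.E a b → K.E b a)
    (yA : AP) (t : V) (hy : ∀ v, yA ∈ K.label v ↔ v = t)
    (k : ℕ) (hk : 1 ≤ k) (p q : Fin (k - 1) → AP)
    (hpinj : Function.Injective p) (hqinj : Function.Injective q)
    (hpq : ∀ i j, p i ≠ q j) (hpy : ∀ i, p i ≠ yA) (hqy : ∀ i, q i ≠ yA)
    (hpfresh : ∀ i v, p i ∉ K.label v) (hqfresh : ∀ i v, q i ∉ K.label v)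
    (x : V) :
    (PhiConn k p yA).sat K x ↔ (PsiConn k p q yA).sat K x :=
  phiConn_iff_psiConn_general K yA t hy k p q hpinj hpq hpy x
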